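/- Let u = (u_1,…,u_S) be a local minimizer of the relaxed Potts functional P_{γ,ρ}, and suppose μ* satisfies the duality identity inf{ Σ_{s}(1/S)‖Av_s − f‖₂² : v ∈ V(u), Cv = 0 } = inf_{v ∈ V(u)} ( Σ_{s}(1/S)‖Av_s − f‖₂² + ⟨μ*, Cv⟩ ). Then the components of u are close in the sense that Σ_{1≤s<s'≤S} c_{s,s'} ‖u_s − u_{s'}‖₂² ≤ ( ‖μ*‖₂ / ρ )². -/

import Mathlib

/-!
Along `V(u)` the jump terms of `P_{γ,ρ}` can only decrease, so a local minimizer `u` of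
`P_{γ,ρ}` is a local, hence (by convexity) global, minimizer of the quadratic part
`g + ρ‖C·‖²` on `V(u)`. Comparing with the feasible points of the constrained problem gives
`g(u) + ρ‖Cu‖² ≤ inf {g(v) : v ∈ V(u), Cv = 0}`, which by the duality identity is at most
`g(u) + ⟨μ*, Cu⟩`; Cauchy–Schwarz then yields `ρ‖Cu‖² ≤ ‖μ*‖ ‖Cu‖`.
-/

open Finset

/-- The discrete image domain `Ω = {0,…,M−1} × {0,…,N−1} ⊆ ℤ²`. -/
noncomputable def gridDomain (M N : ℕ) : Finset (ℤ × ℤ) :=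
  (Finset.Ico (0 : ℤ) (M : ℤ)) ×ˢ (Finset.Ico (0 : ℤ) (N : ℤ))

/-- Pixels of the image domain. -/
abbrev Pix (M N : ℕ) := {p : ℤ × ℤ // p ∈ gridDomain M N}

/-- `‖∇_a u‖₀`: the number of pixels `p ∈ Ω` with `p + a ∈ Ω` and `u (p + a) ≠ u p`. -/
noncomputable def jumpCount (M N : ℕ) (u : Pix M N → ℝ) (a : ℤ × ℤ) : ℕ :=
  Set.ncard {p : Pix M N |
    ∃ h : (p : ℤ × ℤ) + a ∈ gridDomain M N, u ⟨(p : ℤ × ℤ) + a, h⟩ ≠ u p}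

/-- Index set of pairs `s < s'`. -/
abbrev PairIdx (S : ℕ) := {q : Fin S × Fin S // q.1 < q.2}

/-- The pattern subspace `V(u)`. -/
def patternSubspace (M N S : ℕ) (a : Fin S → ℤ × ℤ) (u : Fin S → Pix M N → ℝ) :
    Set (Fin S → Pix M N → ℝ) :=
  {v | ∀ (s : Fin S) (p : Pix M N) (hq : (p : ℤ × ℤ) + a s ∈ gridDomain M N),
    u s ⟨(p : ℤ × ℤ) + a s, hq⟩ = u s p → v s ⟨(p : ℤ × ℤ) + a s, hq⟩ = v s p}

/-- The quadratic penalty relaxation `P_{γ,ρ}`. -/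
noncomputable def relaxedPotts (M N m S : ℕ) (a : Fin S → ℤ × ℤ) (ω : Fin S → ℝ)
    (A : (Pix M N → ℝ) →ₗ[ℝ] (Fin m → ℝ)) (f : Fin m → ℝ) (γ ρ : ℝ)
    (c : Fin S → Fin S → ℝ) (u : Fin S → Pix M N → ℝ) : ℝ :=
  (∑ s, (1 / (S : ℝ)) * ∑ i, (A (u s) i - f i) ^ 2) +
    γ * ∑ s, ω s * (jumpCount M N (u s) (a s) : ℝ) +
    ρ * ∑ q : PairIdx S, c (q : Fin S × Fin S).1 (q : Fin S × Fin S).2 *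
      ∑ p, (u (q : Fin S × Fin S).1 p - u (q : Fin S × Fin S).2 p) ^ 2

/-- The data fidelity `g(v) = Σ_s (1/S)‖Av_s − f‖₂²`. -/
noncomputable def gfun (M N m S : ℕ)
    (A : (Pix M N → ℝ) →ₗ[ℝ] (Fin m → ℝ)) (f : Fin m → ℝ)
    (v : Fin S → Pix M N → ℝ) : ℝ :=
  ∑ s, (1 / (S : ℝ)) * ∑ i, (A (v s) i - f i) ^ 2

/-- The constraint map `C` with components `(Cv)_{(s,s')} = √(c_{s,s'})(v_s − v_{s'})`. -/
noncomputable def Cmap (M N S : ℕ) (c : Fin S → Fin S → ℝ)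
    (v : Fin S → Pix M N → ℝ) : PairIdx S → Pix M N → ℝ :=
  fun q p => Real.sqrt (c (q : Fin S × Fin S).1 (q : Fin S × Fin S).2) *
    (v (q : Fin S × Fin S).1 p - v (q : Fin S × Fin S).2 p)

/-- The Euclidean inner product on pair-indexed families of functions on `Ω`. -/
noncomputable def pinner (M N S : ℕ) (x y : PairIdx S → Pix M N → ℝ) : ℝ :=
  ∑ q, ∑ p, x q p * y q p

section Convexity

variable {ι E : Type*} [AddCommGroup E] [Module ℝ E]

theorem convexOn_finset_sum {s : Set E} (hs : Convex ℝ s) {t : Finset ι} {φ : ι → E → ℝ}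
    (hφ : ∀ i ∈ t, ConvexOn ℝ s (φ i)) : ConvexOn ℝ s fun x => ∑ i ∈ t, φ i x := by
  classical
  induction t using Finset.induction_on with
  | empty => simpa using convexOn_const (0 : ℝ) hs
  | insert i t hi ih =>
    simp_rw [Finset.sum_insert hi]
    exact (hφ i (mem_insert_self i t)).add (ih fun j hj => hφ j (mem_insert_of_mem hj))

theorem convexOn_sq_sub_linearMap (ℓ : E →ₗ[ℝ] ℝ) (b : ℝ) :
    ConvexOn ℝ Set.univ fun x => (ℓ x - b) ^ 2 := by
  refine ⟨convex_univ, fun x _ y _ α β hα hβ hαβ => ?_⟩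
  have hsq := (Even.convexOn_pow (𝕜 := ℝ) even_two).2 (Set.mem_univ (ℓ x - b))
    (Set.mem_univ (ℓ y - b)) hα hβ hαβ
  have hcomb : ℓ (α • x + β • y) - b = α • (ℓ x - b) + β • (ℓ y - b) := by
    simp only [map_add, map_smul, smul_eq_mul]
    linear_combination b * hαβ
  simpa only [hcomb] using hsq

end Convexity

theorem isLocalMin_of_sum_sq_sub_lt {ι κ : Type*} [Fintype ι] [Fintype κ]
    {Φ : (ι → κ → ℝ) → ℝ} {u : ι → κ → ℝ} {ε : ℝ} (hε : 0 < ε)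
    (h : ∀ v, ∑ s, ∑ p, (v s p - u s p) ^ 2 < ε ^ 2 → Φ u ≤ Φ v) : IsLocalMin Φ u := by
  have hopen : IsOpen {v : ι → κ → ℝ | ∑ s, ∑ p, (v s p - u s p) ^ 2 < ε ^ 2} :=
    isOpen_lt (by fun_prop) continuous_const
  exact Filter.mem_of_superset (hopen.mem_nhds (by simpa using pow_pos hε 2)) fun v hv => h v hv

/-- The `max` accounts for the junk value `sInf T = 0` of a set `T ⊆ ℝ` unbounded below. -/
theorem le_max_zero_of_le_sInf {T : Set ℝ} {x y : ℝ} (hy : y ≤ sInf T) (hx : x ∈ T) :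
    y ≤ max x 0 := by
  by_cases hT : BddBelow T
  · exact (hy.trans (csInf_le hT hx)).trans (le_max_left _ _)
  · rw [Real.sInf_of_not_bddBelow hT] at hy
    exact hy.trans (le_max_right _ _)

theorem le_sq_div_of_mul_le_mul_sqrt {ρ K m : ℝ} (hρ : 0 < ρ) (hK : 0 ≤ K)
    (h : ρ * K ≤ m * √K) : K ≤ (m / ρ) ^ 2 := by
  obtain ⟨x, hx, rfl⟩ : ∃ x, 0 ≤ x ∧ K = x ^ 2 := ⟨√K, Real.sqrt_nonneg K, (Real.sq_sqrt hK).symm⟩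
  rw [Real.sqrt_sq hx] at h
  rcases hx.eq_or_lt with rfl | hx
  · simpa using sq_nonneg (m / ρ)
  · have : x ≤ m / ρ := by
      rw [le_div_iff₀ hρ]
      nlinarith
    exact pow_le_pow_left₀ hx.le this 2

section PottsRelaxation

variable {M N m S : ℕ}

noncomputable def couplingEnergy (c : Fin S → Fin S → ℝ) (v : Fin S → Pix M N → ℝ) : ℝ :=
  ∑ q : PairIdx S, c q.1.1 q.1.2 * ∑ p, (v q.1.1 p - v q.1.2 p) ^ 2

theorem couplingEnergy_nonneg {c : Fin S → Fin S → ℝ} (hc : ∀ s s', 0 ≤ c s s')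
    (v : Fin S → Pix M N → ℝ) : 0 ≤ couplingEnergy c v :=
  sum_nonneg fun _ _ => mul_nonneg (hc _ _) (sum_nonneg fun _ _ => sq_nonneg _)

theorem sum_sq_Cmap {c : Fin S → Fin S → ℝ} (hc : ∀ s s', 0 ≤ c s s')
    (v : Fin S → Pix M N → ℝ) :
    ∑ q, ∑ p, Cmap M N S c v q p ^ 2 = couplingEnergy c v := by
  refine sum_congr rfl fun q _ => ?_
  rw [mul_sum]
  simp only [Cmap, mul_pow, Real.sq_sqrt (hc _ _)]

theorem couplingEnergy_eq_zero_of_Cmap_eq_zero {c : Fin S → Fin S → ℝ}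
    (hc : ∀ s s', 0 ≤ c s s') {v : Fin S → Pix M N → ℝ} (hv : Cmap M N S c v = 0) :
    couplingEnergy c v = 0 := by
  simp [← sum_sq_Cmap hc, hv]

theorem convexOn_couplingEnergy {c : Fin S → Fin S → ℝ} (hc : ∀ s s', 0 ≤ c s s') :
    ConvexOn ℝ Set.univ (couplingEnergy (M := M) (N := N) c) := by
  refine convexOn_finset_sum convex_univ fun q _ =>
    (convexOn_finset_sum convex_univ fun p _ => ?_).smul (hc _ _)
  convert convexOn_sq_sub_linearMap ((LinearMap.proj p : (Pix M N → ℝ) →ₗ[ℝ] ℝ) ∘ₗ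
    (LinearMap.proj (R := ℝ) (φ := fun _ : Fin S => Pix M N → ℝ) q.1.1 -
      LinearMap.proj q.1.2)) 0 using 3
  simp

theorem gfun_nonneg (A : (Pix M N → ℝ) →ₗ[ℝ] (Fin m → ℝ)) (f : Fin m → ℝ)
    (v : Fin S → Pix M N → ℝ) : 0 ≤ gfun M N m S A f v :=
  sum_nonneg fun _ _ => mul_nonneg (by positivity) (sum_nonneg fun _ _ => sq_nonneg _)

theorem convexOn_gfun (A : (Pix M N → ℝ) →ₗ[ℝ] (Fin m → ℝ)) (f : Fin m → ℝ) :
    ConvexOn ℝ Set.univ (gfun M N m S A f) :=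
  convexOn_finset_sum convex_univ fun s _ => (convexOn_finset_sum convex_univ fun i _ =>
    convexOn_sq_sub_linearMap (LinearMap.proj i ∘ₗ A ∘ₗ
      (LinearMap.proj s : (Fin S → Pix M N → ℝ) →ₗ[ℝ] Pix M N → ℝ)) (f i)).smul
      (by positivity)

theorem convex_patternSubspace (a : Fin S → ℤ × ℤ) (u : Fin S → Pix M N → ℝ) :
    Convex ℝ (patternSubspace M N S a u) := by
  intro v hv w hw α β _ _ _ s p hq hu
  simp only [Pi.add_apply, Pi.smul_apply, hv s p hq hu, hw s p hq hu]

theorem jumpCount_le_of_mem_patternSubspace {a : Fin S → ℤ × ℤ} {u v : Fin S → Pix M N → ℝ}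
    (hv : v ∈ patternSubspace M N S a u) (s : Fin S) :
    jumpCount M N (v s) (a s) ≤ jumpCount M N (u s) (a s) :=
  Set.ncard_le_ncard (fun _ ⟨hq, hne⟩ => ⟨hq, fun hu => hne (hv s _ hq hu)⟩) (Set.toFinite _)

theorem isLocalMinOn_gfun_add_couplingEnergy {a : Fin S → ℤ × ℤ} {ω : Fin S → ℝ}
    {A : (Pix M N → ℝ) →ₗ[ℝ] (Fin m → ℝ)} {f : Fin m → ℝ} {γ ρ : ℝ}
    {c : Fin S → Fin S → ℝ} {u : Fin S → Pix M N → ℝ} (hγ : 0 ≤ γ) (hω : ∀ s, 0 ≤ ω s)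
    (hu : IsLocalMin (relaxedPotts M N m S a ω A f γ ρ c) u) :
    IsLocalMinOn (fun v => gfun M N m S A f v + ρ * couplingEnergy c v)
      (patternSubspace M N S a u) u := by
  filter_upwards [hu.on (patternSubspace M N S a u), self_mem_nhdsWithin] with v hPv hv
  have hjump : γ * ∑ s, ω s * (jumpCount M N (v s) (a s) : ℝ) ≤
      γ * ∑ s, ω s * (jumpCount M N (u s) (a s) : ℝ) :=
    mul_le_mul_of_nonneg_left (sum_le_sum fun s _ => mul_le_mul_of_nonneg_left
      (by exact_mod_cast jumpCount_le_of_mem_patternSubspace hv s) (hω s)) hγ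
  change gfun M N m S A f u + _ + ρ * couplingEnergy c u ≤
    gfun M N m S A f v + _ + ρ * couplingEnergy c v at hPv
  linarith

theorem add_couplingEnergy_le_sInf_of_isMinOn {a : Fin S → ℤ × ℤ}
    {A : (Pix M N → ℝ) →ₗ[ℝ] (Fin m → ℝ)} {f : Fin m → ℝ} {ρ : ℝ}
    {c : Fin S → Fin S → ℝ} (hc : ∀ s s', 0 ≤ c s s') {u : Fin S → Pix M N → ℝ}
    (hu : IsMinOn (fun v => gfun M N m S A f v + ρ * couplingEnergy c v)
      (patternSubspace M N S a u) u) :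
    gfun M N m S A f u + ρ * couplingEnergy c u ≤
      sInf {r : ℝ | ∃ v ∈ patternSubspace M N S a u,
        Cmap M N S c v = 0 ∧ r = gfun M N m S A f v} := by
  refine le_csInf ⟨_, 0, fun _ _ _ _ => rfl, by ext; simp [Cmap], rfl⟩ ?_
  rintro r ⟨v, hv, hCv, rfl⟩
  simpa [couplingEnergy_eq_zero_of_Cmap_eq_zero hc hCv] using hu hv

theorem pinner_le_sqrt_mul_sqrt (x y : PairIdx S → Pix M N → ℝ) :
    pinner M N S x y ≤ √(∑ q, ∑ p, x q p ^ 2) * √(∑ q, ∑ p, y q p ^ 2) := by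
  simpa only [pinner, ← Fintype.sum_prod_type'] using
    Real.sum_mul_le_sqrt_mul_sqrt univ (fun i : PairIdx S × Pix M N => x i.1 i.2)
      fun i => y i.1 i.2

end PottsRelaxation

theorem local_min_components_close_general (M N m S : ℕ)
    (a : Fin S → ℤ × ℤ)
    (ω : Fin S → ℝ) (hω : ∀ s, 0 < ω s)
    (A : (Pix M N → ℝ) →ₗ[ℝ] (Fin m → ℝ)) (f : Fin m → ℝ)
    (γ : ℝ) (hγ : 0 < γ) (ρ : ℝ) (hρ : 0 < ρ)
    (c : Fin S → Fin S → ℝ) (hc : ∀ s s', 0 ≤ c s s')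
    (u : Fin S → Pix M N → ℝ)
    (hlocmin : ∃ ε > (0 : ℝ), ∀ v : Fin S → Pix M N → ℝ,
      (∑ s, ∑ p, (v s p - u s p) ^ 2) < ε ^ 2 →
        relaxedPotts M N m S a ω A f γ ρ c u ≤ relaxedPotts M N m S a ω A f γ ρ c v)
    (μstar : PairIdx S → Pix M N → ℝ)
    (hdual : sInf {r : ℝ | ∃ v ∈ patternSubspace M N S a u,
        Cmap M N S c v = 0 ∧ r = gfun M N m S A f v} =
      sInf {r : ℝ | ∃ v ∈ patternSubspace M N S a u,
        r = gfun M N m S A f v + pinner M N S μstar (Cmap M N S c v)}) :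
    (∑ q : PairIdx S, c (q : Fin S × Fin S).1 (q : Fin S × Fin S).2 *
        ∑ p, (u (q : Fin S × Fin S).1 p - u (q : Fin S × Fin S).2 p) ^ 2) ≤
      (Real.sqrt (∑ q, ∑ p, μstar q p ^ 2) / ρ) ^ 2 := by
  obtain ⟨ε, hε, hmin⟩ := hlocmin
  have hu_mem : u ∈ patternSubspace M N S a u := fun _ _ _ h => h
  have hmin_on := IsMinOn.of_isLocalMinOn_of_convexOn hu_mem
    (isLocalMinOn_gfun_add_couplingEnergy hγ.le (fun s => (hω s).le)
      (isLocalMin_of_sum_sq_sub_lt hε hmin))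
    (((convexOn_gfun A f).add ((convexOn_couplingEnergy hc).smul hρ.le)).subset
      (Set.subset_univ _) (convex_patternSubspace a u))
  have hprimal := add_couplingEnergy_le_sInf_of_isMinOn hc hmin_on
  rw [hdual] at hprimal
  have hbound := le_max_zero_of_le_sInf hprimal ⟨u, hu_mem, rfl⟩
  have hCS := pinner_le_sqrt_mul_sqrt μstar (Cmap M N S c u)
  rw [sum_sq_Cmap hc] at hCS
  show couplingEnergy c u ≤ _
  refine le_sq_div_of_mul_le_mul_sqrt hρ (couplingEnergy_nonneg hc u) ?_
  have hg := gfun_nonneg A f u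
  have hmax : max (gfun M N m S A f u + pinner M N S μstar (Cmap M N S c u)) 0 ≤
      gfun M N m S A f u + √(∑ q, ∑ p, μstar q p ^ 2) * √(couplingEnergy c u) :=
    max_le (by linarith) (add_nonneg hg (by positivity))
  linarith

/-- if `u` is a local minimizer of the relaxed Potts functional `P_{γ,ρ}`
and `μ*` satisfies the Lagrange duality identity for minimizing the data term over
`V(u) ∩ ker C`, then `Σ_{s<s'} c_{s,s'}‖u_s − u_{s'}‖₂² ≤ (‖μ*‖₂/ρ)²`. -/
theorem local_min_components_close (M N m S : ℕ)
    (hM : 1 ≤ M) (hN : 1 ≤ N) (hS : 1 ≤ S)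
    (a : Fin S → ℤ × ℤ) (ha : ∀ s, a s ≠ 0)
    (ω : Fin S → ℝ) (hω : ∀ s, 0 < ω s)
    (A : (Pix M N → ℝ) →ₗ[ℝ] (Fin m → ℝ)) (f : Fin m → ℝ)
    (γ : ℝ) (hγ : 0 < γ) (ρ : ℝ) (hρ : 0 < ρ)
    (c : Fin S → Fin S → ℝ) (hc : ∀ s s', 0 ≤ c s s')
    (hcnz : ∃ q : PairIdx S, c (q : Fin S × Fin S).1 (q : Fin S × Fin S).2 ≠ 0)
    (u : Fin S → Pix M N → ℝ)
    (hlocmin : ∃ ε > (0 : ℝ), ∀ v : Fin S → Pix M N → ℝ,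
      (∑ s, ∑ p, (v s p - u s p) ^ 2) < ε ^ 2 →
        relaxedPotts M N m S a ω A f γ ρ c u ≤ relaxedPotts M N m S a ω A f γ ρ c v)
    (μstar : PairIdx S → Pix M N → ℝ)
    (hdual : sInf {r : ℝ | ∃ v ∈ patternSubspace M N S a u,
        Cmap M N S c v = 0 ∧ r = gfun M N m S A f v} =
      sInf {r : ℝ | ∃ v ∈ patternSubspace M N S a u,
        r = gfun M N m S A f v + pinner M N S μstar (Cmap M N S c v)}) :
    (∑ q : PairIdx S, c (q : Fin S × Fin S).1 (q : Fin S × Fin S).2 *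
        ∑ p, (u (q : Fin S × Fin S).1 p - u (q : Fin S × Fin S).2 p) ^ 2) ≤
      (Real.sqrt (∑ q, ∑ p, μstar q p ^ 2) / ρ) ^ 2 :=
  local_min_components_close_general M N m S a ω hω A f γ hγ ρ hρ c hc u hlocmin μstar hdual
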